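/- arXiv:2211.12031 — 2 statements merged into one kernel-verified Lean document; each statement's English description precedes it below -/
import Mathlib

section
/- Let m ≥ n be positive integers, let A, B ∈ ℝ^{m×m} be symmetric positive definite matrices, and let R ∈ ℝ^{n×m} be surjective. Then the minimum eigenvalue of (R B⁻¹ Rᵀ)⁻¹ (R A Rᵀ) is at least the minimum of the generalized Rayleigh quotient (xᵀAx)/(xᵀB⁻¹x) over nonzero x ∈ ℝ^m; i.e., λ_min((R B⁻¹ Rᵀ)⁻¹ R A Rᵀ) ≥ λ_min(BA). -/
open Matrix
open scoped MatrixOrder ComplexOrder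

/-!
Every eigenvalue `μ` of `(R B⁻¹ Rᵀ)⁻¹ R A Rᵀ` has an eigenvector `v ≠ 0` with
`R A Rᵀ v = μ R B⁻¹ Rᵀ v`, so `μ` is the Rayleigh quotient `xᵀAx / xᵀB⁻¹x` at `x = Rᵀ v`,
which is nonzero because `Rᵀ` is injective. Hence the spectrum lies in the set of Rayleigh
quotients, which is bounded below by `0`. The spectrum is nonempty since, writing
`R B⁻¹ Rᵀ = L²` with `L` symmetric, the matrix is similar to the symmetric `L⁻¹ R A Rᵀ L⁻¹`.
-/

namespace Matrix

variable {ι κ : Type*} [Fintype ι]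

theorem vecMul_injective_of_mulVec_surjective {R : Type*} [CommSemiring R] [Fintype κ]
    [DecidableEq κ] {A : Matrix κ ι R} (hA : Function.Surjective A.mulVec) :
    Function.Injective A.vecMul := by
  obtain ⟨B, hAB⟩ := mulVec_surjective_iff_exists_right_inverse.mp hA
  intro x y hxy
  simpa [vecMul_vecMul, hAB] using congrArg (· ᵥ* B) hxy

def rayleighQuotients (D C : Matrix ι ι ℝ) : Set ℝ :=
  {r | ∃ x : ι → ℝ, x ≠ 0 ∧ r = (x ⬝ᵥ D *ᵥ x) / (x ⬝ᵥ C *ᵥ x)}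

theorem rayleighQuotients_nonneg {D C : Matrix ι ι ℝ} (hD : D.PosSemidef) (hC : C.PosSemidef)
    {r : ℝ} (hr : r ∈ rayleighQuotients D C) : 0 ≤ r := by
  obtain ⟨x, -, rfl⟩ := hr
  have hDx := hD.dotProduct_mulVec_nonneg x
  have hCx := hC.dotProduct_mulVec_nonneg x
  simp only [star_trivial] at hDx hCx
  positivity

theorem rayleighQuotients_mul_mul_transpose_subset [Fintype κ] {D C : Matrix ι ι ℝ}
    {R : Matrix κ ι ℝ} (hR : Function.Injective R.vecMul) :
    rayleighQuotients (R * D * Rᵀ) (R * C * Rᵀ) ⊆ rayleighQuotients D C := by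
  have hquad (P : Matrix ι ι ℝ) (v : κ → ℝ) :
      v ⬝ᵥ (R * P * Rᵀ) *ᵥ v = (v ᵥ* R) ⬝ᵥ P *ᵥ (v ᵥ* R) := by
    rw [← mulVec_mulVec, ← mulVec_mulVec, dotProduct_mulVec, mulVec_transpose]
  rintro r ⟨v, hv, rfl⟩
  exact ⟨v ᵥ* R, fun h => hv (hR (h.trans (zero_vecMul R).symm)), by rw [hquad, hquad]⟩

variable [DecidableEq ι]

theorem exists_mulVec_eq_smul_of_mem_spectrum {K : Type*} [Field K] {M : Matrix ι ι K} {μ : K}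
    (hμ : μ ∈ spectrum K M) : ∃ v ≠ 0, M *ᵥ v = μ • v := by
  rw [← spectrum_toLin', ← Module.End.hasEigenvalue_iff_mem_spectrum] at hμ
  obtain ⟨v, hv⟩ := hμ.exists_hasEigenvector
  exact ⟨v, hv.2, by simpa using hv.apply_eq_smul⟩

theorem spectrum_inv_mul_subset_rayleighQuotients {D C : Matrix ι ι ℝ} (hC : C.PosDef) :
    spectrum ℝ (C⁻¹ * D) ⊆ rayleighQuotients D C := by
  intro μ hμ
  obtain ⟨v, hv, hev⟩ := exists_mulVec_eq_smul_of_mem_spectrum hμ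
  have hgen : D *ᵥ v = μ • C *ᵥ v :=
    calc D *ᵥ v = C *ᵥ ((C⁻¹ * D) *ᵥ v) := by
          rw [mulVec_mulVec, ← mul_assoc, mul_nonsing_inv _ hC.det_pos.ne'.isUnit, one_mul]
      _ = μ • C *ᵥ v := by rw [hev, mulVec_smul]
  have hCv : 0 < v ⬝ᵥ C *ᵥ v := by simpa using hC.dotProduct_mulVec_pos hv
  refine ⟨v, hv, ?_⟩
  rw [hgen, dotProduct_smul, smul_eq_mul, mul_div_cancel_right₀ _ hCv.ne']

theorem spectrum_inv_mul_nonempty {𝕜 : Type*} [RCLike 𝕜] [Nonempty ι] {C D : Matrix ι ι 𝕜}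
    (hC : C.PosDef) (hD : D.IsHermitian) : (spectrum ℝ (C⁻¹ * D)).Nonempty := by
  obtain ⟨L, hLL, hL, hLh⟩ : ∃ L : Matrix ι ι 𝕜, L * L = C ∧ IsUnit L ∧ L.IsHermitian :=
    ⟨CFC.sqrt C, CFC.sqrt_mul_sqrt_self C hC.posSemidef.nonneg,
      (CFC.isUnit_sqrt_iff C hC.posSemidef.nonneg).mpr hC.isUnit,
      (CFC.sqrt_nonneg C).posSemidef.isHermitian⟩
  have hconj : C⁻¹ * D =
      ((hL.unit⁻¹ : (Matrix ι ι 𝕜)ˣ) : Matrix ι ι 𝕜) * (L⁻¹ * D * L⁻¹) * hL.unit := by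
    rw [← hLL, mul_inv_rev, coe_units_inv, IsUnit.unit_spec]
    simp [mul_assoc, nonsing_inv_mul _ ((isUnit_iff_isUnit_det L).mp hL)]
  have hsymm : (L⁻¹ * D * L⁻¹).IsHermitian := by
    simpa [hLh.inv.eq] using isHermitian_mul_mul_conjTranspose L⁻¹ hD
  rw [hconj, spectrum.units_conjugate']
  exact ⟨_, hsymm.eigenvalues_mem_spectrum_real (Classical.arbitrary ι)⟩

end Matrix

theorem stmt_1_general {m n : ℕ} (hn : 0 < n)
    (A B : Matrix (Fin m) (Fin m) ℝ) (hA : A.PosDef) (hB : B.PosDef)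
    (R : Matrix (Fin n) (Fin m) ℝ) (hR : Function.Surjective R.mulVec) :
    sInf {r : ℝ | ∃ x : Fin m → ℝ, x ≠ 0 ∧
        r = (x ⬝ᵥ A.mulVec x) / (x ⬝ᵥ B⁻¹.mulVec x)} ≤
    sInf (spectrum ℝ ((R * B⁻¹ * R.transpose)⁻¹ * (R * A * R.transpose))) := by
  have : Nonempty (Fin n) := ⟨⟨0, hn⟩⟩
  have hRt : Function.Injective R.vecMul := vecMul_injective_of_mulVec_surjective hR
  have hC : (R * B⁻¹ * Rᵀ).PosDef := by
    simpa using hB.inv.mul_mul_conjTranspose_same hRt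
  have hD : (R * A * Rᵀ).IsHermitian := by
    simpa using isHermitian_mul_mul_conjTranspose R hA.isHermitian
  exact csInf_le_csInf ⟨0, fun r => rayleighQuotients_nonneg hA.posSemidef hB.inv.posSemidef⟩
    (spectrum_inv_mul_nonempty hC hD)
    ((spectrum_inv_mul_subset_rayleighQuotients hC).trans
      (rayleighQuotients_mul_mul_transpose_subset hRt))

/-- λ_min((R B⁻¹ Rᵀ)⁻¹ R A Rᵀ) ≥ λ_min(BA), where λ_min(BA) is the minimum of the
generalized Rayleigh quotient (xᵀAx)/(xᵀB⁻¹x) over nonzero x ∈ ℝ^m, and λ_min of the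
preconditioned matrix is the infimum of its (real, positive) spectrum. -/
theorem stmt_1 {m n : ℕ} (hmn : n ≤ m) (hn : 0 < n)
    (A B : Matrix (Fin m) (Fin m) ℝ) (hA : A.PosDef) (hB : B.PosDef)
    (R : Matrix (Fin n) (Fin m) ℝ) (hR : Function.Surjective R.mulVec) :
    sInf {r : ℝ | ∃ x : Fin m → ℝ, x ≠ 0 ∧
        r = (x ⬝ᵥ A.mulVec x) / (x ⬝ᵥ B⁻¹.mulVec x)} ≤
    sInf (spectrum ℝ ((R * B⁻¹ * R.transpose)⁻¹ * (R * A * R.transpose))) :=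
  stmt_1_general hn A B hA hB R hR
end

section
/- Let m ≥ n be positive integers, let A, B ∈ ℝ^{m×m} be symmetric positive definite matrices, and let R ∈ ℝ^{n×m} be surjective. Then the condition number of (R B⁻¹ Rᵀ)⁻¹ (R A Rᵀ) is at most the condition number of BA, where the condition number is λ_max/λ_min over the (real positive) eigenvalues. -/
/-!
For `P` positive definite and `Q` symmetric, `P⁻¹Q` is similar to `√P⁻¹ Q √P⁻¹`, so its spectrum
is real and `r P ≤ Q ≤ s P` in the Loewner order exactly when that spectrum lies in `[r, s]`.
Applied to `P = B⁻¹`, `Q = A` this gives `λ_min(BA) B⁻¹ ≤ A ≤ λ_max(BA) B⁻¹`; conjugating by the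
surjective `R` preserves both inequalities, so the spectrum of `(RB⁻¹Rᵀ)⁻¹(RARᵀ)` lies in
`[λ_min(BA), λ_max(BA)]`, and the ratio of its extremes is at most `κ(BA)`.
-/

open Matrix
open scoped MatrixOrder Ring

namespace CFC

section

variable {A : Type*} [PartialOrder A] [Ring A] [StarRing A] [TopologicalSpace A]
  [StarOrderedRing A] [Algebra ℝ A] [ContinuousFunctionalCalculus ℝ A IsSelfAdjoint]
  [NonnegSpectrumClass ℝ A] [IsSemitopologicalRing A]

lemma isSelfAdjoint_conjSqrt (c : A) {a : A} (ha : IsSelfAdjoint a) :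
    IsSelfAdjoint (conjSqrt c a) := by
  rw [conjSqrt_apply]
  exact ha.conjugate_self (sqrt_nonneg c).isSelfAdjoint

variable [T2Space A] {P Q : A}

lemma spectrum_ringInverse_mul_eq_spectrum_conjSqrt (hP : IsStrictlyPositive P) (Q : A) :
    spectrum ℝ (P⁻¹ʳ * Q) = spectrum ℝ (conjSqrt P⁻¹ʳ Q) := by
  obtain ⟨s, hs⟩ : IsUnit (sqrt P⁻¹ʳ) := hP.ringInverse.sqrt.isUnit
  have hss : (s : A) * s = P⁻¹ʳ := hs ▸ sqrt_mul_sqrt_self _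
  have hconj : P⁻¹ʳ * Q = s * conjSqrt P⁻¹ʳ Q * ↑s⁻¹ := by
    rw [conjSqrt_apply, ← hs, ← hss]
    simp [mul_assoc]
  rw [hconj, spectrum.units_conjugate]

lemma conjSqrt_ringInverse_smul_self (hP : IsStrictlyPositive P) (r : ℝ) :
    conjSqrt P⁻¹ʳ (r • P) = algebraMap ℝ A r := by
  rw [map_smul, conjSqrt_ringInverse_self P, Algebra.algebraMap_eq_smul_one]

lemma conjSqrt_ringInverse_le_conjSqrt_ringInverse_iff (hP : IsStrictlyPositive P) {a b : A} :
    conjSqrt P⁻¹ʳ a ≤ conjSqrt P⁻¹ʳ b ↔ a ≤ b := by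
  refine ⟨fun h => ?_, fun h => conjSqrt_le_conjSqrt h⟩
  simpa [conjSqrt_conjSqrt_ringInverse P _ hP] using conjSqrt_le_conjSqrt (c := P) h

lemma le_smul_iff_forall_spectrum_ringInverse_mul_le (hP : IsStrictlyPositive P)
    (hQ : IsSelfAdjoint Q) (r : ℝ) :
    Q ≤ r • P ↔ ∀ μ ∈ spectrum ℝ (P⁻¹ʳ * Q), μ ≤ r := by
  rw [← conjSqrt_ringInverse_le_conjSqrt_ringInverse_iff hP, conjSqrt_ringInverse_smul_self hP,
    spectrum_ringInverse_mul_eq_spectrum_conjSqrt hP,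
    le_algebraMap_iff_spectrum_le (isSelfAdjoint_conjSqrt _ hQ)]

lemma smul_le_iff_forall_le_spectrum_ringInverse_mul (hP : IsStrictlyPositive P)
    (hQ : IsSelfAdjoint Q) (r : ℝ) :
    r • P ≤ Q ↔ ∀ μ ∈ spectrum ℝ (P⁻¹ʳ * Q), r ≤ μ := by
  rw [← conjSqrt_ringInverse_le_conjSqrt_ringInverse_iff hP, conjSqrt_ringInverse_smul_self hP,
    spectrum_ringInverse_mul_eq_spectrum_conjSqrt hP,
    algebraMap_le_iff_le_spectrum (isSelfAdjoint_conjSqrt _ hQ)]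

lemma spectrum_ringInverse_mul_nonempty [Nontrivial A] (hP : IsStrictlyPositive P)
    (hQ : IsSelfAdjoint Q) : (spectrum ℝ (P⁻¹ʳ * Q)).Nonempty := by
  rw [spectrum_ringInverse_mul_eq_spectrum_conjSqrt hP]
  exact ContinuousFunctionalCalculus.spectrum_nonempty _ (isSelfAdjoint_conjSqrt _ hQ)

lemma pos_of_mem_spectrum_ringInverse_mul (hP : IsStrictlyPositive P)
    (hQ : IsStrictlyPositive Q) {μ : ℝ} (hμ : μ ∈ spectrum ℝ (P⁻¹ʳ * Q)) : 0 < μ := by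
  rw [spectrum_ringInverse_mul_eq_spectrum_conjSqrt hP] at hμ
  exact ((isStrictlyPositive_conjSqrt_iff _ Q hP.ringInverse).mpr hQ).spectrum_pos hμ

end

end CFC

namespace Matrix

variable {m n : Type*} [Fintype m] [Fintype n]

lemma vecMul_injective_of_mulVec_surjective_s2 [DecidableEq n] {R : Matrix n m ℝ}
    (hR : Function.Surjective R.mulVec) : Function.Injective R.vecMul := by
  obtain ⟨S, hRS⟩ := mulVec_surjective_iff_exists_right_inverse.mp hR
  refine Function.LeftInverse.injective (g := S.vecMul) fun x => ?_
  change x ᵥ* R ᵥ* S = x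
  rw [vecMul_vecMul, hRS, vecMul_one]

lemma PosDef.mul_mul_transpose_of_mulVec_surjective [DecidableEq n] {P : Matrix m m ℝ}
    (hP : P.PosDef) {R : Matrix n m ℝ} (hR : Function.Surjective R.mulVec) :
    (R * P * Rᵀ).PosDef := by
  simpa using hP.mul_mul_conjTranspose_same (vecMul_injective_of_mulVec_surjective_s2 hR)

lemma mul_mul_transpose_le_mul_mul_transpose {M N : Matrix m m ℝ} (h : M ≤ N)
    (R : Matrix n m ℝ) : R * M * Rᵀ ≤ R * N * Rᵀ := by
  rw [le_iff, ← Matrix.sub_mul, ← Matrix.mul_sub]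
  simpa using (le_iff.mp h).mul_mul_conjTranspose_same R

variable [DecidableEq m]

lemma spectrum_inv_mul_nonempty_s2 [Nonempty m] {P Q : Matrix m m ℝ} (hP : P.PosDef)
    (hQ : Q.IsHermitian) : (spectrum ℝ (P⁻¹ * Q)).Nonempty := by
  rw [nonsing_inv_eq_ringInverse]
  exact CFC.spectrum_ringInverse_mul_nonempty hP.isStrictlyPositive hQ

lemma pos_of_mem_spectrum_inv_mul {P Q : Matrix m m ℝ} (hP : P.PosDef) (hQ : Q.PosDef) {μ : ℝ}
    (hμ : μ ∈ spectrum ℝ (P⁻¹ * Q)) : 0 < μ := by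
  rw [nonsing_inv_eq_ringInverse] at hμ
  exact CFC.pos_of_mem_spectrum_ringInverse_mul hP.isStrictlyPositive hQ.isStrictlyPositive hμ

variable [DecidableEq n]

lemma spectrum_compression_subset_Icc {P Q : Matrix m m ℝ} (hP : P.PosDef) (hQ : Q.IsHermitian)
    {R : Matrix n m ℝ} (hR : Function.Surjective R.mulVec) :
    spectrum ℝ ((R * P * Rᵀ)⁻¹ * (R * Q * Rᵀ)) ⊆
      Set.Icc (sInf (spectrum ℝ (P⁻¹ * Q))) (sSup (spectrum ℝ (P⁻¹ * Q))) := by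
  have hPR := (hP.mul_mul_transpose_of_mulVec_surjective hR).isStrictlyPositive
  have hQR : (R * Q * Rᵀ).IsHermitian := by
    simpa using isHermitian_mul_mul_conjTranspose R hQ
  have hfin := finite_real_spectrum (A := P⁻¹ * Q)
  simp only [nonsing_inv_eq_ringInverse] at hfin ⊢
  have hlower : sInf (spectrum ℝ (P⁻¹ʳ * Q)) • P ≤ Q :=
    (CFC.smul_le_iff_forall_le_spectrum_ringInverse_mul hP.isStrictlyPositive hQ _).mpr
      fun _ hν => csInf_le hfin.bddBelow hν
  have hupper : Q ≤ sSup (spectrum ℝ (P⁻¹ʳ * Q)) • P :=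
    (CFC.le_smul_iff_forall_spectrum_ringInverse_mul_le hP.isStrictlyPositive hQ _).mpr
      fun _ hν => le_csSup hfin.bddAbove hν
  have hlowerR : sInf (spectrum ℝ (P⁻¹ʳ * Q)) • (R * P * Rᵀ) ≤ R * Q * Rᵀ := by
    simpa only [Matrix.mul_smul, Matrix.smul_mul] using
      mul_mul_transpose_le_mul_mul_transpose hlower R
  have hupperR : R * Q * Rᵀ ≤ sSup (spectrum ℝ (P⁻¹ʳ * Q)) • (R * P * Rᵀ) := by
    simpa only [Matrix.mul_smul, Matrix.smul_mul] using
      mul_mul_transpose_le_mul_mul_transpose hupper R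
  exact fun μ hμ =>
    ⟨(CFC.smul_le_iff_forall_le_spectrum_ringInverse_mul hPR hQR _).mp hlowerR μ hμ,
      (CFC.le_smul_iff_forall_spectrum_ringInverse_mul_le hPR hQR _).mp hupperR μ hμ⟩

end Matrix

lemma csSup_div_csInf_le_of_subset_Icc {S : Set ℝ} (hS : S.Nonempty) {a b : ℝ} (ha : 0 < a)
    (h : S ⊆ Set.Icc a b) : sSup S / sInf S ≤ b / a := by
  obtain ⟨x, hx⟩ := hS
  exact div_le_div₀ (ha.le.trans ((h hx).1.trans (h hx).2)) (csSup_le ⟨x, hx⟩ fun y hy => (h hy).2)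
    ha (le_csInf ⟨x, hx⟩ fun y hy => (h hy).1)

/-- κ((R B⁻¹ Rᵀ)⁻¹ R A Rᵀ) ≤ κ(BA), where κ(M) = λ_max(M)/λ_min(M) taken over the
(real, positive) eigenvalues, i.e., over the real spectrum of the matrix. -/
theorem stmt_2 {m n : ℕ} (hmn : n ≤ m) (hn : 0 < n)
    (A B : Matrix (Fin m) (Fin m) ℝ) (hA : A.PosDef) (hB : B.PosDef)
    (R : Matrix (Fin n) (Fin m) ℝ) (hR : Function.Surjective R.mulVec) :
    sSup (spectrum ℝ ((R * B⁻¹ * R.transpose)⁻¹ * (R * A * R.transpose))) /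
      sInf (spectrum ℝ ((R * B⁻¹ * R.transpose)⁻¹ * (R * A * R.transpose))) ≤
    sSup (spectrum ℝ (B * A)) / sInf (spectrum ℝ (B * A)) := by
  have : Nonempty (Fin n) := ⟨⟨0, hn⟩⟩
  have : Nonempty (Fin m) := ⟨⟨0, hn.trans_le hmn⟩⟩
  have hBinv : B⁻¹⁻¹ = B := nonsing_inv_nonsing_inv _ hB.det_pos.ne'.isUnit
  have hsub := spectrum_compression_subset_Icc hB.inv hA.isHermitian hR
  have hne := spectrum_inv_mul_nonempty_s2 hB.inv hA.isHermitian
  rw [hBinv] at hsub hne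
  have hpos : 0 < sInf (spectrum ℝ (B * A)) :=
    pos_of_mem_spectrum_inv_mul hB.inv hA (by rw [hBinv]; exact hne.csInf_mem finite_real_spectrum)
  exact csSup_div_csInf_le_of_subset_Icc (spectrum_inv_mul_nonempty_s2
    (hB.inv.mul_mul_transpose_of_mulVec_surjective hR)
    (hA.mul_mul_transpose_of_mulVec_surjective hR).isHermitian) hpos hsub
end
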